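/- arXiv:1709.01840 — 2 statements merged into one kernel-verified Lean document; each statement's English description precedes it below -/
import Mathlib

section
/- Let H be an infinite-dimensional separable complex Hilbert space and let T be a bounded linear operator on H with property (CR). Then there exist α, β, γ, δ ∈ ℂ, not all zero, and a bounded operator F on H whose range is finite-dimensional of dimension at most 3, such that α·1 + β·T + γ·T† + δ·(T†∘T) + F = 0. -/
open ContinuousLinearMap

/-- `P` is an orthogonal projection. -/
def IsOrthoProj {H : Type*} [NormedAddCommGroup H] [InnerProductSpace ℂ H]
    [CompleteSpace H] (P : H →L[ℂ] H) : Prop :=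
  P * P = P ∧ ContinuousLinearMap.adjoint P = P

/-- Property (CR): the two off-diagonal corners always have the same rank
(as a cardinal, the dimension of the range). -/
def HasCR {H : Type*} [NormedAddCommGroup H] [InnerProductSpace ℂ H]
    [CompleteSpace H] (T : H →L[ℂ] H) : Prop :=
  ∀ P : H →L[ℂ] H, IsOrthoProj P →
    LinearMap.rank ((P * T * (1 - P) : H →L[ℂ] H) : H →ₗ[ℂ] H) =
    LinearMap.rank (((1 - P) * T * P : H →L[ℂ] H) : H →ₗ[ℂ] H)

/-! The operators `1, T, T†, T†T` are locally linearly dependent. Indeed, fix `x`, and let `P` be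
the orthogonal projection onto `M = span {x, T x}`. Since `T x ∈ M`, the corner `(1 - P) T P` has
rank at most one; by (CR) so does `P T (1 - P)`, hence also its adjoint `(1 - P) T† P` (because
`ker (A A†) = ker A†`, so `rank A† ≤ rank A`). Evaluating this adjoint at `x` and `T x` puts a
nontrivial combination of `T† x` and `T† T x` into `M`.

By a theorem of Brešar and Šemrl, if `m + 1` linear maps are locally linearly dependent then some
nontrivial combination of them has rank at most `m`. By induction it suffices to treat the case
where the first `m` maps are independent at some `x₀`. -/

universe u

open Submodule Topology

theorem LinearIndependent.exists_linearMap_apply_eq_single {K V ι : Type*} [Field K]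
    [AddCommGroup V] [Module K V] {v : ι → V} (hv : LinearIndependent K v) :
    ∃ π : V →ₗ[K] ι →₀ K, ∀ i, π (v i) = Finsupp.single i 1 := by
  obtain ⟨π, hπ⟩ := LinearMap.exists_extend hv.repr
  refine ⟨π, fun i => ?_⟩
  have hvi : v i ∈ span K (Set.range v) := subset_span (Set.mem_range_self i)
  simpa [hv.repr_eq_single i ⟨v i, hvi⟩ rfl] using LinearMap.congr_fun hπ ⟨v i, hvi⟩

theorem LinearMap.not_linearIndependent_of_rank_lt {K V W ι : Type*} [Field K]
    [AddCommGroup V] [Module K V] [AddCommGroup W] [Module K W] [Fintype ι]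
    (f : V →ₗ[K] W) (hf : f.rank < Fintype.card ι) (v : ι → V) :
    ¬ LinearIndependent K (fun i => f (v i)) := by
  intro hv
  have hv' : LinearIndependent K (fun i => f.rangeRestrict (v i)) :=
    LinearIndependent.of_comp (range f).subtype hv
  exact (hf.trans_le (by simpa using hv'.cardinal_lift_le_rank)).false

theorem ContinuousAt.exists_ne_apply_ne {X Y : Type*} [TopologicalSpace X] [TopologicalSpace Y]
    [T1Space Y] {f : X → Y} {a : X} [(𝓝[≠] a).NeBot] (hf : ContinuousAt f a) {b : Y}
    (h : f a ≠ b) : ∃ x ≠ a, f x ≠ b :=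
  (((hf.eventually_ne h).filter_mono nhdsWithin_le_nhds).and
    (self_mem_nhdsWithin (s := {a}ᶜ))).exists.imp fun _ hx => ⟨hx.2, hx.1⟩

section LocallyLinearlyDependent

variable {𝕜 U W : Type*} [NontriviallyNormedField 𝕜] [AddCommGroup U] [Module 𝕜 U]
  [AddCommGroup W] [Module 𝕜 W]

/- If `S y ∉ span (g · x₀)`, then for small `t ≠ 0` the vectors `g j (x₀ + t • y)` and `S y` are
still independent (their coordinates form a matrix close to `1`), although
`S (x₀ + t • y) = t • S y` lies in the span of the former. -/
theorem LinearMap.range_le_span_of_forall_mem_span {m : ℕ} (g : Fin m → U →ₗ[𝕜] W)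
    (S : U →ₗ[𝕜] W) {x₀ : U} (hx₀ : LinearIndependent 𝕜 fun j => g j x₀) (hS₀ : S x₀ = 0)
    (hS : ∀ x, LinearIndependent 𝕜 (fun j => g j x) → S x ∈ span 𝕜 (Set.range fun j => g j x)) :
    range S ≤ span 𝕜 (Set.range fun j => g j x₀) := by
  rintro _ ⟨y, rfl⟩
  by_contra hy
  obtain ⟨π, hπ⟩ := (linearIndependent_finSnoc.mpr ⟨hx₀, hy⟩).exists_linearMap_apply_eq_single
  set u : 𝕜 → Fin (m + 1) → W := fun t => Fin.snoc (fun j => g j (x₀ + t • y)) (S y)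
  set M : 𝕜 → Matrix (Fin (m + 1)) (Fin (m + 1)) 𝕜 := fun t => Matrix.of fun i j => π (u t j) i
  have hM : ∀ t, M t = 1 + t • Matrix.of fun i j =>
      π (Fin.snoc (α := fun _ => W) (fun j => g j y) 0 j) i := by
    intro t
    ext i j
    refine Fin.lastCases ?_ (fun k => ?_) j
    · simpa [M, u, Matrix.one_apply, Finsupp.single_apply, eq_comm] using
        congr($(hπ (Fin.last m)) i)
    · simpa [M, u, Matrix.one_apply, Finsupp.single_apply, eq_comm] using
        congr($(hπ k.castSucc) i)
  have hcont : Continuous fun t => (M t).det := by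
    simp only [hM]
    fun_prop
  obtain ⟨t, ht, hdet⟩ := hcont.continuousAt.exists_ne_apply_ne (a := 0) (b := 0) (by simp [hM])
  have hind : LinearIndependent 𝕜 (u t) :=
    LinearIndependent.of_comp (Finsupp.lcoeFun ∘ₗ π)
      (Matrix.linearIndependent_cols_of_det_ne_zero hdet)
  obtain ⟨hg, hSy⟩ := linearIndependent_finSnoc.mp hind
  have hSt := hS _ hg
  rw [map_add, map_smul, hS₀, zero_add, smul_mem_iff _ ht] at hSt
  exact hSy hSt

theorem LinearMap.exists_rank_le_of_linearIndependent_init {m : ℕ}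
    (f : Fin (m + 1) → U →ₗ[𝕜] W) (hf : ∀ x, ¬ LinearIndependent 𝕜 fun i => f i x) {x₀ : U}
    (hx₀ : LinearIndependent 𝕜 fun j : Fin m => f j.castSucc x₀) :
    ∃ c : Fin (m + 1) → 𝕜, c ≠ 0 ∧ (∑ i, c i • f i).rank ≤ m := by
  have hspan : ∀ x, LinearIndependent 𝕜 (fun j : Fin m => f j.castSucc x) →
      f (Fin.last m) x ∈ span 𝕜 (Set.range fun j : Fin m => f j.castSucc x) := by
    intro x hx
    by_contra h
    exact hf x (Fin.snoc_init_self (fun i => f i x) ▸ linearIndependent_finSnoc.mpr ⟨hx, h⟩)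
  obtain ⟨α, hα⟩ := (mem_span_range_iff_exists_fun 𝕜).mp (hspan x₀ hx₀)
  set S := f (Fin.last m) - ∑ j : Fin m, α j • f j.castSucc
  have hrange : range S ≤ span 𝕜 (Set.range fun j : Fin m => f j.castSucc x₀) := by
    refine range_le_span_of_forall_mem_span (fun j => f j.castSucc) S hx₀ (by simp [S, hα])
      fun x hx => ?_
    simpa [S] using sub_mem (hspan x hx)
      (sum_mem fun j _ => smul_mem _ (α j) (subset_span (Set.mem_range_self j)))
  have hS : ∑ i, (Fin.snoc (-α) 1 : Fin (m + 1) → 𝕜) i • f i = S := by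
    simp [S, Fin.sum_univ_castSucc, sub_eq_neg_add]
  refine ⟨Fin.snoc (-α) 1, fun h => one_ne_zero (α := 𝕜) (by simpa using congrFun h (Fin.last m)),
    hS ▸ ?_⟩
  calc S.rank ≤ Cardinal.mk (Set.range fun j : Fin m => f j.castSucc x₀) :=
        (rank_mono hrange).trans (rank_span_le _)
    _ ≤ m := by simpa using Cardinal.mk_range_le_lift (f := fun j : Fin m => f j.castSucc x₀)

theorem LinearMap.exists_rank_le_of_forall_not_linearIndependent {m : ℕ}
    (f : Fin (m + 1) → U →ₗ[𝕜] W) (hf : ∀ x, ¬ LinearIndependent 𝕜 fun i => f i x) :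
    ∃ c : Fin (m + 1) → 𝕜, c ≠ 0 ∧ (∑ i, c i • f i).rank ≤ m := by
  induction m with
  | zero =>
    exact exists_rank_le_of_linearIndependent_init f hf (x₀ := 0) linearIndependent_empty_type
  | succ k ih =>
    by_cases h : ∃ x₀, LinearIndependent 𝕜 fun j : Fin (k + 1) => f j.castSucc x₀
    · obtain ⟨x₀, hx₀⟩ := h
      exact exists_rank_le_of_linearIndependent_init f hf hx₀
    · obtain ⟨c, hc, hrank⟩ := ih (fun j => f j.castSucc) (not_exists.mp h)
      refine ⟨Fin.snoc c 0, fun h0 => hc (funext fun j => by simpa using congrFun h0 j.castSucc),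
        ?_⟩
      simpa [Fin.sum_univ_castSucc] using hrank.trans (Nat.cast_le.mpr k.le_succ)

end LocallyLinearlyDependent

theorem ContinuousLinearMap.rank_adjoint_le {𝕜 : Type*} {E F : Type u} [RCLike 𝕜]
    [NormedAddCommGroup E] [InnerProductSpace 𝕜 E] [CompleteSpace E]
    [NormedAddCommGroup F] [InnerProductSpace 𝕜 F] [CompleteSpace F] (A : E →L[𝕜] F) :
    (adjoint A : F →ₗ[𝕜] E).rank ≤ (A : E →ₗ[𝕜] F).rank := by
  have hker : LinearMap.ker ((A ∘L adjoint A : F →L[𝕜] F) : F →ₗ[𝕜] F) =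
      LinearMap.ker (adjoint A : F →ₗ[𝕜] E) :=
    A.ker_self_comp_adjoint
  calc (adjoint A : F →ₗ[𝕜] E).rank
      = Module.rank 𝕜 (F ⧸ LinearMap.ker (adjoint A : F →ₗ[𝕜] E)) :=
        (LinearMap.quotKerEquivRange _).rank_eq.symm
    _ = Module.rank 𝕜 (F ⧸ LinearMap.ker ((A ∘L adjoint A : F →L[𝕜] F) : F →ₗ[𝕜] F)) := by
        rw [hker]
    _ = ((A ∘L adjoint A : F →L[𝕜] F) : F →ₗ[𝕜] F).rank :=
        (LinearMap.quotKerEquivRange _).rank_eq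
    _ ≤ (A : E →ₗ[𝕜] F).rank := LinearMap.rank_comp_le_left _ _

theorem ContinuousLinearMap.rank_one_sub_mul_mul_le_one {𝕜 V : Type*} [NormedField 𝕜]
    [NormedAddCommGroup V] [NormedSpace 𝕜 V] {P T : V →L[𝕜] V} {x : V}
    (hP : ∀ z, P z ∈ span 𝕜 {x, T x}) (hPTx : P (T x) = T x) :
    (((1 - P) * T * P : V →L[𝕜] V) : V →ₗ[𝕜] V).rank ≤ 1 := by
  have hTx : (1 - P) (T x) = 0 := by simp [hPTx]
  have hrange : LinearMap.range (((1 - P) * T * P : V →L[𝕜] V) : V →ₗ[𝕜] V) ≤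
      𝕜 ∙ (1 - P) (T (T x)) := by
    rintro _ ⟨z, rfl⟩
    obtain ⟨p, q, hpq⟩ := mem_span_pair.mp (hP z)
    change (1 - P) (T (P z)) ∈ _
    rw [← hpq]
    simp only [map_add, map_smul, hTx, smul_zero, zero_add]
    exact mem_span_singleton.mpr ⟨q, rfl⟩
  exact (rank_mono hrange).trans ((rank_span_le _).trans (by simp))

section PropertyCR

variable {H : Type*} [NormedAddCommGroup H] [InnerProductSpace ℂ H] [CompleteSpace H]

theorem isOrthoProj_starProjection (K : Submodule ℂ H) [K.HasOrthogonalProjection] :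
    IsOrthoProj K.starProjection :=
  ⟨K.isIdempotentElem_starProjection, (isSelfAdjoint_starProjection K).adjoint_eq⟩

theorem HasCR.not_linearIndependent {T : H →L[ℂ] H} (hT : HasCR T) (x : H) :
    ¬ LinearIndependent ℂ ![x, T x, adjoint T x, adjoint T (T x)] := by
  set M := span ℂ {x, T x}
  have : FiniteDimensional ℂ M := FiniteDimensional.span_of_finite ℂ (Set.toFinite _)
  set P := M.starProjection
  have hPM : ∀ z, P z = z ↔ z ∈ M := fun z => starProjection_eq_self_iff
  have hP : IsOrthoProj P := isOrthoProj_starProjection M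
  have hPx : P x = x := (hPM x).mpr (subset_span (by simp))
  have hPTx : P (T x) = T x := (hPM (T x)).mpr (subset_span (by simp))
  have hadj : adjoint (P * T * (1 - P)) = (1 - P) * adjoint T * P := by
    have hPstar : star P = P := hP.2
    simp only [← star_eq_adjoint, star_mul, star_sub, star_one, hPstar, mul_assoc]
  have hrank : (((1 - P) * adjoint T * P : H →L[ℂ] H) : H →ₗ[ℂ] H).rank ≤ 1 :=
    hadj ▸ (rank_adjoint_le _).trans ((hT P hP).trans_le
      (rank_one_sub_mul_mul_le_one M.starProjection_apply_mem hPTx))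
  obtain ⟨c, hc, i, hi⟩ := Fintype.not_linearIndependent_iff.mp
    (LinearMap.not_linearIndependent_of_rank_lt _ (hrank.trans_lt (by norm_num)) ![x, T x])
  have hr : (1 - P) (adjoint T (c 0 • x + c 1 • T x)) = 0 := by
    rw [← hc]
    simp [Fin.sum_univ_two, hPx, hPTx]
    module
  have hmem : adjoint T (c 0 • x + c 1 • T x) ∈ M :=
    (hPM _).mp (sub_eq_zero.mp (by simpa using hr)).symm
  obtain ⟨p, q, hpq⟩ := mem_span_pair.mp hmem
  intro hind
  have h4 := Fintype.linearIndependent_iff.mp hind ![p, q, -c 0, -c 1] (by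
    simp [Fin.sum_univ_four, hpq])
  fin_cases i
  · exact hi (by simpa using h4 2)
  · exact hi (by simpa using h4 3)

end PropertyCR

theorem stmt13_general {H : Type*} [NormedAddCommGroup H] [InnerProductSpace ℂ H]
    [CompleteSpace H] (T : H →L[ℂ] H) (hT : HasCR T) :
    ∃ (α β γ δ : ℂ) (F : H →L[ℂ] H),
      ¬ (α = 0 ∧ β = 0 ∧ γ = 0 ∧ δ = 0) ∧
      LinearMap.rank ((F : H →L[ℂ] H) : H →ₗ[ℂ] H) ≤ 3 ∧
      α • (1 : H →L[ℂ] H) + β • T + γ • ContinuousLinearMap.adjoint T +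
        δ • (ContinuousLinearMap.adjoint T * T) + F = 0 := by
  set f : Fin 4 → H →L[ℂ] H := ![1, T, adjoint T, adjoint T * T]
  obtain ⟨c, hc, hrank⟩ := LinearMap.exists_rank_le_of_forall_not_linearIndependent
    (fun i => (f i : H →ₗ[ℂ] H)) fun x => by
      have hfx : (fun i => (f i : H →ₗ[ℂ] H) x) = ![x, T x, adjoint T x, adjoint T (T x)] := by
        ext i
        fin_cases i <;> rfl
      exact hfx ▸ hT.not_linearIndependent x
  refine ⟨c 0, c 1, c 2, c 3, -∑ i, c i • f i, fun h => hc ?_, ?_, ?_⟩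
  · ext i
    fin_cases i <;> simp [h.1, h.2.1, h.2.2.1, h.2.2.2]
  · rw [toLinearMap_neg, LinearMap.rank, LinearMap.range_neg, ← LinearMap.rank, toLinearMap_sum]
    simpa using hrank
  · simp [f, Fin.sum_univ_four]

theorem stmt13 {H : Type*} [NormedAddCommGroup H] [InnerProductSpace ℂ H]
    [CompleteSpace H] [TopologicalSpace.SeparableSpace H]
    (hinf : ¬ FiniteDimensional ℂ H) (T : H →L[ℂ] H) (hT : HasCR T) :
    ∃ (α β γ δ : ℂ) (F : H →L[ℂ] H),
      ¬ (α = 0 ∧ β = 0 ∧ γ = 0 ∧ δ = 0) ∧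
      LinearMap.rank ((F : H →L[ℂ] H) : H →ₗ[ℂ] H) ≤ 3 ∧
      α • (1 : H →L[ℂ] H) + β • T + γ • ContinuousLinearMap.adjoint T +
        δ • (ContinuousLinearMap.adjoint T * T) + F = 0 :=
  stmt13_general T hT
end

section
/- Let H be an infinite-dimensional separable complex Hilbert space and let U be a unitary operator on H whose spectrum σ(U) is not the whole unit circle {z ∈ ℂ : |z| = 1}. Then U has property (CR). -/
open ContinuousLinearMap

/-!
Pick `z` on the unit circle outside `σ(U)`. Then `V = z⁻¹ • U` is unitary with `1 - V` invertible,
and since `V` is an isometry, `2 Re ⟪(1 - V) x, x⟫ = ‖(1 - V) x‖² ≥ c ‖x‖²`. For an orthogonal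
projection `P` this accretivity passes to the compression: with `a = P V P`, the operator
`W = 1 - a` satisfies the same kind of bound and is therefore invertible. For the corners
`b = P V (1 - P)` and `d = (1 - P) V P` and `S = W⁻¹ + W⁻¹* + P - 2` one checks
`b b* = P - a a* = W S W*` and `d* d = P - a* a = W* S W`, so
`rank b = rank (b b*) = rank S = rank (d* d) = rank d`.
-/

open scoped InnerProductSpace

namespace IsStarProjection

variable {R : Type*} [Ring R] [StarRing R] {p v : R}

theorem corner_mul_star_corner_eq (hp : IsStarProjection p) (hv : v * star v = 1) (w : Rˣ)
    (hw : (w : R) = 1 - p * v * p) :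
    p * v * (1 - p) * star (p * v * (1 - p)) =
      w * ((↑w⁻¹ : R) + star (↑w⁻¹ : R) + p - 2) * star (w : R) := by
  have hpp : p * p = p := hp.isIdempotentElem
  have hps : star p = p := hp.isSelfAdjoint
  obtain ⟨a, ha⟩ : ∃ a, a = p * v * p := ⟨_, rfl⟩
  have hsa : star a = p * star v * p := by rw [ha, star_mul, star_mul, hps, mul_assoc]
  have hap : a * p = a := by rw [ha, mul_assoc, hpp]
  have hpsa : p * star a = star a := by rw [hsa, ← mul_assoc, ← mul_assoc, hpp]
  have hw' : star (w : R) = 1 - star a := by rw [hw, ← ha, star_sub, star_one]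
  have corner : p * v * (1 - p) * star (p * v * (1 - p)) = p - a * star a := by
    rw [star_mul, star_mul, star_sub, star_one, hps]
    calc p * v * (1 - p) * ((1 - p) * (star v * p))
        = p * v * ((1 - p) * (1 - p)) * star v * p := by noncomm_ring
      _ = p * (v * star v) * p - p * v * p * star v * p := by
        rw [hp.one_sub.isIdempotentElem.eq]; noncomm_ring
      _ = p - a * star a := by
        rw [hv, mul_one, hpp, ← ha, hsa, ← mul_assoc, ← mul_assoc, hap]
  have hg : (w : R) * ↑w⁻¹ * star (w : R) = star (w : R) := by simp
  have hg' : (w : R) * star (↑w⁻¹ : R) * star (w : R) = w := by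
    rw [mul_assoc, ← star_mul, Units.mul_inv, star_one, mul_one]
  have hp' : (w : R) * p * star (w : R) = p - a - star a + a * star a := by
    rw [hw', hw, ← ha]
    calc (1 - a) * p * (1 - star a) = p - a * p - p * star a + a * (p * star a) := by noncomm_ring
      _ = p - a - star a + a * star a := by rw [hap, hpsa]
  rw [corner]
  symm
  calc (w : R) * ((↑w⁻¹ : R) + star (↑w⁻¹ : R) + p - 2) * star (w : R)
      = (w : R) * ↑w⁻¹ * star (w : R) + (w : R) * star (↑w⁻¹ : R) * star (w : R)
          + (w : R) * p * star (w : R) - 2 * ((w : R) * star (w : R)) := by noncomm_ring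
    _ = star (w : R) + w + (p - a - star a + a * star a) - 2 * (w * star (w : R)) := by
        rw [hg, hg', hp']
    _ = p - a * star a := by rw [hw', hw, ← ha]; noncomm_ring

theorem star_corner_mul_corner_eq (hp : IsStarProjection p) (hv : star v * v = 1) (w : Rˣ)
    (hw : (w : R) = 1 - p * v * p) :
    star ((1 - p) * v * p) * ((1 - p) * v * p) =
      star (w : R) * ((↑w⁻¹ : R) + star (↑w⁻¹ : R) + p - 2) * w := by
  have hps : star p = p := hp.isSelfAdjoint
  have key := hp.corner_mul_star_corner_eq (v := star v) (by rwa [star_star]) (star w)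
    (by rw [Units.coe_star, hw, star_sub, star_one, star_mul, star_mul, hps, mul_assoc])
  have hc : star ((1 - p) * v * p) = p * star v * (1 - p) := by
    rw [star_mul, star_mul, star_sub, star_one, hps, mul_assoc]
  rw [hc, ← star_star ((1 - p) * v * p), hc, key, Units.coe_star, Units.coe_star_inv, star_star,
    add_comm (star (↑w⁻¹ : R)), star_star]

end IsStarProjection

namespace LinearMap

universe u v

variable {K : Type*} {M : Type u} {N N' : Type v} [Ring K] [AddCommGroup M] [Module K M]
  [AddCommGroup N] [Module K N] [AddCommGroup N'] [Module K N']

theorem rank_eq_of_ker_eq {f g : M →ₗ[K] N} (h : ker f = ker g) : f.rank = g.rank := by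
  apply Cardinal.lift_injective.{u}
  rw [← f.quotKerEquivRange.lift_rank_eq, ← g.quotKerEquivRange.lift_rank_eq, h]

theorem rank_comp_of_injective (f : M →ₗ[K] N) {g : N →ₗ[K] N'} (hg : Function.Injective g) :
    (g ∘ₗ f).rank = f.rank := by
  rw [rank, range_comp]
  exact (Submodule.equivMapOfInjective g hg _).rank_eq.symm

theorem rank_comp_of_surjective (f : N →ₗ[K] N') {g : M →ₗ[K] N} (hg : Function.Surjective g) :
    (f ∘ₗ g).rank = f.rank := by
  rw [rank, range_comp, range_eq_top.mpr hg, Submodule.map_top]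

end LinearMap

namespace ContinuousLinearMap

section Units

variable {R M : Type*} [Ring R] [TopologicalSpace M] [AddCommGroup M] [ContinuousAdd M]
  [Module R M]

theorem rank_mul_mul_of_isUnit {A B : M →L[R] M} (hA : IsUnit A) (hB : IsUnit B) (S : M →L[R] M) :
    (↑(A * S * B) : M →ₗ[R] M).rank = (S : M →ₗ[R] M).rank := by
  have hA' := Module.End.isUnit_iff _ |>.mp (hA.map toLinearMapRingHom)
  have hB' := Module.End.isUnit_iff _ |>.mp (hB.map toLinearMapRingHom)
  exact (LinearMap.rank_comp_of_surjective _ hB'.2).trans (LinearMap.rank_comp_of_injective _ hA'.1)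

end Units

variable {𝕜 E : Type*} [RCLike 𝕜] [NormedAddCommGroup E] [InnerProductSpace 𝕜 E]

def IsStronglyAccretive (T : E →L[𝕜] E) : Prop :=
  ∃ c > 0, ∀ x, c * ‖x‖ ^ 2 ≤ RCLike.re ⟪T x, x⟫_𝕜

theorem IsStronglyAccretive.isUnit [CompleteSpace E] {T : E →L[𝕜] E}
    (hT : T.IsStronglyAccretive) : IsUnit T := by
  obtain ⟨c, hc, hT⟩ := hT
  refine isUnit_of_forall_le_norm_inner_map T (c := ⟨c, hc.le⟩) hc fun x => ?_
  calc ‖x‖ ^ 2 * c = c * ‖x‖ ^ 2 := mul_comm _ _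
    _ ≤ RCLike.re ⟪T x, x⟫_𝕜 := hT x
    _ ≤ ‖⟪T x, x⟫_𝕜‖ := RCLike.re_le_norm _

theorem exists_pos_mul_norm_le_of_isUnit {T : E →L[𝕜] E} (hT : IsUnit T) :
    ∃ c > 0, ∀ x, c * ‖x‖ ≤ ‖T x‖ := by
  obtain ⟨u, rfl⟩ := hT
  refine antilipschitzWith_iff_exists_mul_le_norm.mp ⟨‖(↑u⁻¹ : E →L[𝕜] E)‖₊,
    (u : E →L[𝕜] E).antilipschitz_of_bound fun x => ?_⟩
  calc ‖x‖ = ‖(↑u⁻¹ : E →L[𝕜] E) ((u : E →L[𝕜] E) x)‖ := by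
        rw [← mul_apply_eq_comp, Units.inv_mul, one_apply_eq_self]
    _ ≤ _ := le_opNorm _ _

theorem two_mul_re_inner_one_sub_apply_self {V : E →L[𝕜] E} (hV : ∀ x, ‖V x‖ = ‖x‖) (x : E) :
    2 * RCLike.re ⟪(1 - V) x, x⟫_𝕜 = ‖(1 - V) x‖ ^ 2 := by
  rw [sub_apply, one_apply_eq_self, norm_sub_sq (𝕜 := 𝕜), hV, inner_sub_left, map_sub,
    inner_self_eq_norm_sq, inner_re_symm]
  ring

theorem isStronglyAccretive_one_sub {V : E →L[𝕜] E} (hV : ∀ x, ‖V x‖ = ‖x‖)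
    (h : IsUnit (1 - V)) : (1 - V).IsStronglyAccretive := by
  obtain ⟨c, hc, hbound⟩ := exists_pos_mul_norm_le_of_isUnit h
  refine ⟨c ^ 2 / 2, by positivity, fun x => ?_⟩
  have := two_mul_re_inner_one_sub_apply_self hV x
  nlinarith [hbound x, mul_nonneg hc.le (norm_nonneg x)]

variable [CompleteSpace E]

theorem _root_.IsStarProjection.re_inner_apply_self {P : E →L[𝕜] E} (hP : IsStarProjection P)
    (x : E) : RCLike.re ⟪P x, x⟫_𝕜 = ‖P x‖ ^ 2 := by
  have hPP : P (P x) = P x := DFunLike.congr_fun hP.isIdempotentElem.eq x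
  rw [← inner_self_eq_norm_sq (𝕜 := 𝕜), ← adjoint_inner_left, hP.isSelfAdjoint.adjoint_eq, hPP]

theorem IsStronglyAccretive.one_sub_add_mul_mul {T : E →L[𝕜] E} (hT : T.IsStronglyAccretive)
    {P : E →L[𝕜] E} (hP : IsStarProjection P) : (1 - P + P * T * P).IsStronglyAccretive := by
  obtain ⟨c, hc, hT⟩ := hT
  refine ⟨min c 1, by positivity, fun x => ?_⟩
  have hPx : ‖P x‖ ≤ ‖x‖ :=
    (P.le_opNorm x).trans (mul_le_of_le_one_left (norm_nonneg _) (hP.norm_le P))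
  have hre : RCLike.re ⟪(1 - P + P * T * P) x, x⟫_𝕜 =
      ‖x‖ ^ 2 - ‖P x‖ ^ 2 + RCLike.re ⟪T (P x), P x⟫_𝕜 := by
    rw [add_apply, sub_apply, one_apply_eq_self, inner_add_left, inner_sub_left, map_add, map_sub,
      inner_self_eq_norm_sq, hP.re_inner_apply_self, mul_apply_eq_comp, mul_apply_eq_comp,
      ← adjoint_inner_right, hP.isSelfAdjoint.adjoint_eq]
  have h1 : 0 ≤ (c - min c 1) * ‖P x‖ ^ 2 := mul_nonneg (by simp) (by positivity)
  have h2 : 0 ≤ (1 - min c 1) * (‖x‖ ^ 2 - ‖P x‖ ^ 2) :=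
    mul_nonneg (by simp) (by nlinarith [norm_nonneg (P x)])
  nlinarith [hT (P x)]

theorem rank_adjoint_mul_self (T : E →L[𝕜] E) :
    (↑(adjoint T * T) : E →ₗ[𝕜] E).rank = (T : E →ₗ[𝕜] E).rank :=
  LinearMap.rank_eq_of_ker_eq T.ker_adjoint_comp_self

theorem rank_adjoint (T : E →L[𝕜] E) : (adjoint T : E →ₗ[𝕜] E).rank = (T : E →ₗ[𝕜] E).rank := by
  have h (S : E →L[𝕜] E) : (S : E →ₗ[𝕜] E).rank ≤ (adjoint S : E →ₗ[𝕜] E).rank :=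
    S.rank_adjoint_mul_self ▸ LinearMap.rank_comp_le_left _ _
  exact le_antisymm (by simpa using h (adjoint T)) (h T)

theorem rank_mul_adjoint_self (T : E →L[𝕜] E) :
    (↑(T * adjoint T) : E →ₗ[𝕜] E).rank = (T : E →ₗ[𝕜] E).rank := by
  simpa [rank_adjoint] using rank_adjoint_mul_self (adjoint T)

end ContinuousLinearMap

section HasCR

variable {H : Type*} [NormedAddCommGroup H] [InnerProductSpace ℂ H] [CompleteSpace H]

theorem isOrthoProj_iff_isStarProjection {P : H →L[ℂ] H} : IsOrthoProj P ↔ IsStarProjection P := by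
  rw [isStarProjection_iff', star_eq_adjoint, IsOrthoProj]

theorem HasCR.smul {T : H →L[ℂ] H} (hT : HasCR T) (c : ℂ) : HasCR (c • T) := by
  obtain rfl | hc := eq_or_ne c 0
  · simp [HasCR]
  intro P hP
  rw [mul_smul_comm, smul_mul_assoc, mul_smul_comm, smul_mul_assoc, toLinearMap_smul,
    toLinearMap_smul, LinearMap.rank, LinearMap.rank, LinearMap.range_smul _ _ hc,
    LinearMap.range_smul _ _ hc]
  exact hT P hP

theorem hasCR_of_mem_unitary_of_isUnit_one_sub {V : H →L[ℂ] H} (hV : V ∈ unitary (H →L[ℂ] H))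
    (h1V : IsUnit (1 - V)) : HasCR V := by
  intro P hP
  replace hP := isOrthoProj_iff_isStarProjection.mp hP
  obtain ⟨W, hW⟩ : IsUnit (1 - P * V * P) := by
    convert ((isStronglyAccretive_one_sub (norm_map_of_mem_unitary hV) h1V).one_sub_add_mul_mul
      hP).isUnit using 1
    rw [mul_sub, sub_mul, mul_one, hP.isIdempotentElem.eq]
    abel
  set S : H →L[ℂ] H := ↑W⁻¹ + star ↑W⁻¹ + P - 2
  calc LinearMap.rank ((P * V * (1 - P) : H →L[ℂ] H) : H →ₗ[ℂ] H)
      = LinearMap.rank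
          ((P * V * (1 - P) * adjoint (P * V * (1 - P)) : H →L[ℂ] H) : H →ₗ[ℂ] H) :=
        (rank_mul_adjoint_self _).symm
    _ = LinearMap.rank ((W * S * adjoint (W : H →L[ℂ] H) : H →L[ℂ] H) : H →ₗ[ℂ] H) := by
        rw [← star_eq_adjoint, ← star_eq_adjoint,
          hP.corner_mul_star_corner_eq (Unitary.mul_star_self_of_mem hV) W hW]
    _ = LinearMap.rank (S : H →ₗ[ℂ] H) := rank_mul_mul_of_isUnit W.isUnit W.isUnit.star S
    _ = LinearMap.rank ((adjoint (W : H →L[ℂ] H) * S * W : H →L[ℂ] H) : H →ₗ[ℂ] H) :=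
        (rank_mul_mul_of_isUnit W.isUnit.star W.isUnit S).symm
    _ = LinearMap.rank
          ((adjoint ((1 - P) * V * P) * ((1 - P) * V * P) : H →L[ℂ] H) : H →ₗ[ℂ] H) := by
        rw [← star_eq_adjoint, ← star_eq_adjoint,
          hP.star_corner_mul_corner_eq (Unitary.star_mul_self_of_mem hV) W hW]
    _ = LinearMap.rank (((1 - P) * V * P : H →L[ℂ] H) : H →ₗ[ℂ] H) := rank_adjoint_mul_self _

end HasCR

theorem stmt18_general {H : Type*} [NormedAddCommGroup H] [InnerProductSpace ℂ H]
    [CompleteSpace H] (U : H →L[ℂ] H)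
    (hU : ContinuousLinearMap.adjoint U * U = 1 ∧ U * ContinuousLinearMap.adjoint U = 1)
    (hspec : spectrum ℂ U ≠ {z : ℂ | ‖z‖ = 1}) :
    HasCR U := by
  have hUu : U ∈ unitary (H →L[ℂ] H) := hU
  obtain ⟨z, hz, hzU⟩ : ∃ z : ℂ, ‖z‖ = 1 ∧ z ∉ spectrum ℂ U := by
    by_contra! h
    refine hspec (Set.Subset.antisymm (fun z hz => ?_) h)
    simpa using spectrum.subset_circle_of_unitary hUu hz
  have hz0 : z ≠ 0 := by rintro rfl; simp at hz
  have hz_inv : z⁻¹ ∈ unitary ℂ := by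
    rw [Unitary.mem_iff, star_inv₀, ← mul_inv, ← mul_inv, Complex.star_def, Complex.conj_mul',
      Complex.mul_conj', hz]
    simp
  have h1V : IsUnit (1 - z⁻¹ • U) := by
    simpa [Units.smul_def] using (IsUnit.smul_sub_iff_sub_inv_smul (Units.mk0 z hz0) U).mp
      (by simpa [Algebra.algebraMap_eq_smul_one] using spectrum.notMem_iff.mp hzU)
  simpa [smul_smul, hz0] using
    (hasCR_of_mem_unitary_of_isUnit_one_sub (Unitary.smul_mem_of_mem hz_inv hUu) h1V).smul z

theorem stmt18 {H : Type*} [NormedAddCommGroup H] [InnerProductSpace ℂ H]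
    [CompleteSpace H] [TopologicalSpace.SeparableSpace H]
    (hinf : ¬ FiniteDimensional ℂ H) (U : H →L[ℂ] H)
    (hU : ContinuousLinearMap.adjoint U * U = 1 ∧ U * ContinuousLinearMap.adjoint U = 1)
    (hspec : spectrum ℂ U ≠ {z : ℂ | ‖z‖ = 1}) :
    HasCR U :=
  stmt18_general U hU hspec
end
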